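/- arXiv:math-ph/0605065 — 5 statements merged into one kernel-verified Lean document; each statement's English description precedes it below -/
import Mathlib

section
/- Let E be a vector space and L0, L1, L2 locally convex topological vector subspaces with L0 ⊆ L1 ∩ L2. Equip L1 + L2 with the inductive topology and L1 ∩ L2 with the projective topology. If L0 is dense in each of L1, L2, and L1 ∩ L2, and the injections L0 → L1 and L0 → L2 are continuous, then the continuous dual of L1 + L2, regarded as a subspace of the dual of L0, equals the intersection of the duals of L1 and L2. -/
/-- Let `L0 ⊆ L1 ∩ L2` be locally convex subspaces of a vector space `E`,
with `L1 + L2` carrying the inductive topology and `L1 ∩ L2` the projective topology.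
If `L0` is dense in `L1`, `L2` and `L1 ∩ L2`, and the injections `L0 → L1`, `L0 → L2`
are continuous, then `(L1 + L2)' = L1' ∩ L2'` inside `L0'`: a continuous functional `v`
on `L0` extends continuously to `L1 + L2` iff it extends continuously to both `L1` and
`L2`. -/
theorem stmt_0 (E : Type*) [AddCommGroup E] [Module ℝ E]
    (L0 L1 L2 : Submodule ℝ E) (h01 : L0 ≤ L1) (h02 : L0 ≤ L2)
    (t0 : TopologicalSpace L0) (t1 : TopologicalSpace L1) (t2 : TopologicalSpace L2)
    (t0grp : @IsTopologicalAddGroup L0 t0 _) (t0smul : @ContinuousSMul ℝ L0 _ _ t0)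
    (t0lcs : @LocallyConvexSpace ℝ L0 _ _ _ _ t0)
    (t1grp : @IsTopologicalAddGroup L1 t1 _) (t1smul : @ContinuousSMul ℝ L1 _ _ t1)
    (t1lcs : @LocallyConvexSpace ℝ L1 _ _ _ _ t1)
    (t2grp : @IsTopologicalAddGroup L2 t2 _) (t2smul : @ContinuousSMul ℝ L2 _ _ t2)
    (t2lcs : @LocallyConvexSpace ℝ L2 _ _ _ _ t2)
    -- the injections L0 → L1 and L0 → L2 are continuous
    (hc1 : @Continuous _ _ t0 t1 (Submodule.inclusion h01))
    (hc2 : @Continuous _ _ t0 t2 (Submodule.inclusion h02))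
    -- L0 is dense in L1 and in L2
    (hd1 : @DenseRange _ t1 _ (Submodule.inclusion h01))
    (hd2 : @DenseRange _ t2 _ (Submodule.inclusion h02))
    -- L1 ∩ L2 carries the projective topology ...
    (tI : TopologicalSpace ↥(L1 ⊓ L2))
    (hI : tI =
      TopologicalSpace.induced
          (Submodule.inclusion (inf_le_left : L1 ⊓ L2 ≤ L1)) t1 ⊓
        TopologicalSpace.induced
          (Submodule.inclusion (inf_le_right : L1 ⊓ L2 ≤ L2)) t2)
    -- ... and L0 is dense in L1 ∩ L2
    (hdI : @DenseRange _ tI _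
      (Submodule.inclusion (le_inf h01 h02 : L0 ≤ L1 ⊓ L2)))
    -- tS is the inductive (finest locally convex) topology on L1 + L2
    (tS : TopologicalSpace ↥(L1 ⊔ L2))
    (tSgrp : @IsTopologicalAddGroup ↥(L1 ⊔ L2) tS _)
    (tSsmul : @ContinuousSMul ℝ ↥(L1 ⊔ L2) _ _ tS)
    (tSlcs : @LocallyConvexSpace ℝ ↥(L1 ⊔ L2) _ _ _ _ tS)
    (tScont1 : @Continuous _ _ t1 tS (Submodule.inclusion (le_sup_left : L1 ≤ L1 ⊔ L2)))
    (tScont2 : @Continuous _ _ t2 tS (Submodule.inclusion (le_sup_right : L2 ≤ L1 ⊔ L2)))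
    (tSfinest : ∀ t' : TopologicalSpace ↥(L1 ⊔ L2),
      @IsTopologicalAddGroup ↥(L1 ⊔ L2) t' _ →
      @ContinuousSMul ℝ ↥(L1 ⊔ L2) _ _ t' →
      @LocallyConvexSpace ℝ ↥(L1 ⊔ L2) _ _ _ _ t' →
      @Continuous _ _ t1 t' (Submodule.inclusion (le_sup_left : L1 ≤ L1 ⊔ L2)) →
      @Continuous _ _ t2 t' (Submodule.inclusion (le_sup_right : L2 ≤ L1 ⊔ L2)) →
      tS ≤ t') :
    -- conclusion: (L1 + L2)' = L1' ∩ L2' as subspaces of L0'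
    ∀ v : L0 →ₗ[ℝ] ℝ, @Continuous _ _ t0 _ v →
      ((∃ w : ↥(L1 ⊔ L2) →ₗ[ℝ] ℝ, @Continuous _ _ tS _ w ∧
          ∀ x : L0, w (Submodule.inclusion (h01.trans le_sup_left : L0 ≤ L1 ⊔ L2) x) = v x)
        ↔
       ((∃ w₁ : L1 →ₗ[ℝ] ℝ, @Continuous _ _ t1 _ w₁ ∧
           ∀ x : L0, w₁ (Submodule.inclusion h01 x) = v x) ∧
        (∃ w₂ : L2 →ₗ[ℝ] ℝ, @Continuous _ _ t2 _ w₂ ∧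
           ∀ x : L0, w₂ (Submodule.inclusion h02 x) = v x))) := by
  intro v hv
  letI := t0; letI := t1; letI := t2; letI := tI
  constructor
  · rintro ⟨w, hwc, hwv⟩
    refine ⟨⟨w ∘ₗ Submodule.inclusion le_sup_left, hwc.comp tScont1, fun x => hwv x⟩,
            ⟨w ∘ₗ Submodule.inclusion le_sup_right, hwc.comp tScont2, fun x => ?_⟩⟩
    have : Submodule.inclusion (le_sup_right : L2 ≤ L1 ⊔ L2) (Submodule.inclusion h02 x)
        = Submodule.inclusion (h01.trans le_sup_left : L0 ≤ L1 ⊔ L2) x := rfl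
    simpa [this] using hwv x
  · rintro ⟨⟨w₁, hw₁c, hw₁v⟩, ⟨w₂, hw₂c, hw₂v⟩⟩
    -- the two extensions agree on L1 ⊓ L2 by density
    have hIc1 : Continuous (Submodule.inclusion (inf_le_left : L1 ⊓ L2 ≤ L1)) := by
      rw [continuous_iff_le_induced]
      exact hI.le.trans inf_le_left
    have hIc2 : Continuous (Submodule.inclusion (inf_le_right : L1 ⊓ L2 ≤ L2)) := by
      rw [continuous_iff_le_induced]
      exact hI.le.trans inf_le_right
    have hagree : ∀ c : ↥(L1 ⊓ L2),
        w₁ (Submodule.inclusion inf_le_left c) = w₂ (Submodule.inclusion inf_le_right c) := by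
      have heq := hdI.equalizer
        (g := fun c : ↥(L1 ⊓ L2) => w₁ (Submodule.inclusion inf_le_left c))
        (h := fun c : ↥(L1 ⊓ L2) => w₂ (Submodule.inclusion inf_le_right c))
        (hw₁c.comp hIc1) (hw₂c.comp hIc2)
        (by
          funext x
          have e1 : Submodule.inclusion (inf_le_left : L1 ⊓ L2 ≤ L1)
              (Submodule.inclusion (le_inf h01 h02) x) = Submodule.inclusion h01 x := rfl
          have e2 : Submodule.inclusion (inf_le_right : L1 ⊓ L2 ≤ L2)
              (Submodule.inclusion (le_inf h01 h02) x) = Submodule.inclusion h02 x := rfl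
          simp only [Function.comp_apply, e1, e2, hw₁v x, hw₂v x])
      exact fun c => congrFun heq c
    -- the addition map π : L1 × L2 → L1 ⊔ L2
    set π : (L1 × L2) →ₗ[ℝ] ↥(L1 ⊔ L2) :=
      (Submodule.inclusion le_sup_left ∘ₗ LinearMap.fst ℝ L1 L2) +
        (Submodule.inclusion le_sup_right ∘ₗ LinearMap.snd ℝ L1 L2) with hπdef
    have hπ : ∀ p : L1 × L2, ((π p : ↥(L1 ⊔ L2)) : E) = (p.1 : E) + (p.2 : E) := fun p => rfl
    have hsurj : Function.Surjective π := by
      intro x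
      obtain ⟨a, ha, b, hb, hab⟩ := Submodule.mem_sup.mp x.2
      exact ⟨(⟨a, ha⟩, ⟨b, hb⟩), Subtype.ext (by simpa [hπ] using hab)⟩
    set f : (L1 × L2) →ₗ[ℝ] ℝ :=
      (w₁ ∘ₗ LinearMap.fst ℝ L1 L2) + (w₂ ∘ₗ LinearMap.snd ℝ L1 L2) with hfdef
    have hf : ∀ p : L1 × L2, f p = w₁ p.1 + w₂ p.2 := fun p => rfl
    have hker : LinearMap.ker π ≤ LinearMap.ker f := by
      intro p hp
      have hp0 : (p.1 : E) + (p.2 : E) = 0 := by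
        have := congrArg (Subtype.val) (LinearMap.mem_ker.mp hp)
        simpa [hπ] using this
      have hmem : (p.1 : E) ∈ L1 ⊓ L2 := by
        refine ⟨p.1.2, ?_⟩
        have : (p.1 : E) = -(p.2 : E) := eq_neg_of_add_eq_zero_left hp0
        rw [this]; exact neg_mem p.2.2
      set c : ↥(L1 ⊓ L2) := ⟨(p.1 : E), hmem⟩ with hc
      have e1 : Submodule.inclusion (inf_le_left : L1 ⊓ L2 ≤ L1) c = p.1 := rfl
      have e2 : Submodule.inclusion (inf_le_right : L1 ⊓ L2 ≤ L2) c = -p.2 := by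
        apply Subtype.ext
        show (p.1 : E) = -(p.2 : E)
        exact eq_neg_of_add_eq_zero_left hp0
      have : w₁ p.1 = -w₂ p.2 := by
        rw [← e1, hagree c, e2, map_neg]
      rw [LinearMap.mem_ker, hf, this]
      ring
    -- build w on L1 ⊔ L2
    set w : ↥(L1 ⊔ L2) →ₗ[ℝ] ℝ :=
      ((LinearMap.ker π).liftQ f hker) ∘ₗ
        (π.quotKerEquivOfSurjective hsurj).symm.toLinearMap with hwdef
    have hwπ : ∀ p : L1 × L2, w (π p) = f p := by
      intro p
      have h1 : (π.quotKerEquivOfSurjective hsurj).symm (π p)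
          = Submodule.Quotient.mk p := by
        rw [LinearEquiv.symm_apply_eq]
        rfl
      simp [hwdef, h1]
    have hw1 : ∀ a : L1, w (Submodule.inclusion (le_sup_left : L1 ≤ L1 ⊔ L2) a) = w₁ a := by
      intro a
      have : Submodule.inclusion (le_sup_left : L1 ≤ L1 ⊔ L2) a = π (a, 0) :=
        Subtype.ext (by simp [hπ])
      rw [this, hwπ, hf]; simp
    have hw2 : ∀ b : L2, w (Submodule.inclusion (le_sup_right : L2 ≤ L1 ⊔ L2) b) = w₂ b := by
      intro b
      have : Submodule.inclusion (le_sup_right : L2 ≤ L1 ⊔ L2) b = π (0, b) :=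
        Subtype.ext (by simp [hπ])
      rw [this, hwπ, hf]; simp
    -- continuity of w for the inductive topology
    have key : tS ≤ TopologicalSpace.induced w inferInstance := by
      refine tSfinest _ (topologicalAddGroup_induced w) ?_ (LocallyConvexSpace.induced w)
        ?_ ?_
      · letI : TopologicalSpace ↥(L1 ⊔ L2) := TopologicalSpace.induced w inferInstance
        exact Topology.IsInducing.continuousSMul (f := (id : ℝ → ℝ)) ⟨rfl⟩ continuous_id
          (fun {c x} => by simp [map_smul])
      · refine continuous_induced_rng.mpr ?_
        have : (w ∘ Submodule.inclusion (le_sup_left : L1 ≤ L1 ⊔ L2)) = fun a => w₁ a := by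
          funext a; exact hw1 a
        rw [this]; exact hw₁c
      · refine continuous_induced_rng.mpr ?_
        have : (w ∘ Submodule.inclusion (le_sup_right : L2 ≤ L1 ⊔ L2)) = fun b => w₂ b := by
          funext b; exact hw2 b
        rw [this]; exact hw₂c
    refine ⟨w, continuous_iff_le_induced.mpr key, fun x => ?_⟩
    have : Submodule.inclusion (h01.trans le_sup_left : L0 ≤ L1 ⊔ L2) x
        = Submodule.inclusion (le_sup_left : L1 ≤ L1 ⊔ L2) (Submodule.inclusion h01 x) := rfl
    rw [this, hw1, hw₁v]
end

section
/- Let (a_ν)_{ν≥0} be a sequence of positive reals with a_0 = 1, a_{ν+1} ≥ a_ν, and a_ν² ≤ a_{ν-1}·a_{ν+1} for all ν ≥ 1. If the series ∑_{ν≥1} a_ν^{-1/ν} converges, then for every ε > 0 there exists C_ε > 0 such that sup_ν r^ν / a_ν ≤ C_ε · e^{ε r} for all r ≥ 0. -/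
open Real

lemma aux_nat_mul_tendsto {d : ℕ → ℝ} (hnn : ∀ n, 0 ≤ d n)
    (hant : ∀ m n : ℕ, m ≤ n → d n ≤ d m) (hs : Summable d) :
    ∀ ε > (0:ℝ), ∃ N : ℕ, ∀ n ≥ N, ((n : ℝ) + 1) * d n ≤ ε := by
  intro ε hε
  have htail : Filter.Tendsto (fun i => ∑' k, d (k + i)) Filter.atTop (nhds 0) :=
    tendsto_sum_nat_add d
  have h1 : ∀ᶠ i in Filter.atTop, ∑' k, d (k + i) < ε / 2 :=
    (tendsto_order.1 htail).2 (ε / 2) (by positivity)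
  obtain ⟨N, hN⟩ := Filter.eventually_atTop.1 h1
  have h2 : ∀ᶠ n in Filter.atTop, d n < ε / (2 * (N + 1)) :=
    (tendsto_order.1 hs.tendsto_atTop_zero).2 _ (by positivity)
  obtain ⟨M, hM⟩ := Filter.eventually_atTop.1 h2
  refine ⟨max N M, fun n hn => ?_⟩
  have hnN : N ≤ n := le_trans (le_max_left _ _) hn
  have hnM : M ≤ n := le_trans (le_max_right _ _) hn
  -- tail sum bound
  have hsum' : Summable (fun k => d (k + N)) := (summable_nat_add_iff N).2 hs
  have hfin : ∑ j ∈ Finset.range (n - N + 1), d (j + N) ≤ ∑' k, d (k + N) :=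
    Summable.sum_le_tsum (Finset.range (n - N + 1)) (fun k _ => hnn _) hsum'
  have hlow : ((n - N + 1 : ℕ) : ℝ) * d n ≤ ∑ j ∈ Finset.range (n - N + 1), d (j + N) := by
    have := Finset.card_nsmul_le_sum (Finset.range (n - N + 1)) (fun j => d (j + N)) (d n)
      (fun j hj => hant _ _ (by simp at hj; omega))
    simpa [nsmul_eq_mul] using this
  have htb : ((n - N + 1 : ℕ) : ℝ) * d n ≤ ε / 2 :=
    le_trans hlow (le_trans hfin (le_of_lt (hN N le_rfl)))
  have hdn : d n ≤ ε / (2 * (N + 1)) := le_of_lt (hM n hnM)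
  have hcast : ((n : ℝ) + 1) = ((n - N + 1 : ℕ) : ℝ) + (N : ℝ) := by
    push_cast [Nat.cast_sub hnN]
    ring
  have hNd : (N : ℝ) * d n ≤ ε / 2 := by
    have h4 : (N : ℝ) * d n ≤ (N : ℝ) * (ε / (2 * ((N : ℝ) + 1))) :=
      mul_le_mul_of_nonneg_left hdn (Nat.cast_nonneg N)
    have h5 : (N : ℝ) * (ε / (2 * ((N : ℝ) + 1))) = (ε / 2) * ((N : ℝ) / ((N : ℝ) + 1)) := by
      field_simp
    have h6 : (N : ℝ) / ((N : ℝ) + 1) ≤ 1 := by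
      rw [div_le_one (by positivity)]; linarith
    have h7 : (ε / 2) * ((N : ℝ) / ((N : ℝ) + 1)) ≤ ε / 2 * 1 :=
      mul_le_mul_of_nonneg_left h6 (by positivity)
    linarith
  rw [hcast, add_mul]
  linarith

/-- If `(a ν)` is positive, `a 0 = 1`, nondecreasing, log-convex,
and `∑_{ν≥1} a_ν^{-1/ν}` converges, then for every `ε > 0` there is `C > 0` with
`sup_ν r^ν / a_ν ≤ C · e^{ε r}` for all `r ≥ 0`. -/
theorem stmt_2 (a : ℕ → ℝ)
    (hpos : ∀ ν, 0 < a ν)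
    (h0 : a 0 = 1)
    (hmono : ∀ ν, a ν ≤ a (ν + 1))
    (hlogconv : ∀ ν ≥ 1, (a ν) ^ 2 ≤ a (ν - 1) * a (ν + 1))
    (hsum : Summable (fun ν : ℕ => (a (ν + 1)) ^ (-(1 : ℝ) / (ν + 1)))) :
    ∀ ε > 0, ∃ C > 0, ∀ r ≥ (0 : ℝ), ∀ ν : ℕ, r ^ ν / a ν ≤ C * Real.exp (ε * r) := by
  set L : ℕ → ℝ := fun ν => Real.log (a ν) with hLdef
  have hL0 : L 0 = 0 := by simp [hLdef, h0]
  have hgap : ∀ ν : ℕ, 1 ≤ ν → L ν - L (ν - 1) ≤ L (ν + 1) - L ν := by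
    intro ν hν
    have h := hlogconv ν hν
    have h2 : Real.log ((a ν) ^ 2) ≤ Real.log (a (ν - 1) * a (ν + 1)) :=
      Real.log_le_log (pow_pos (hpos ν) 2) h
    rw [Real.log_pow, Real.log_mul (hpos _).ne' (hpos _).ne'] at h2
    push_cast at h2
    simp only [hLdef]
    linarith
  have hkey : ∀ n : ℕ, 1 ≤ n → L n ≤ (n : ℝ) * (L (n + 1) - L n) := by
    intro n hn
    induction n, hn using Nat.le_induction with
    | base =>
      have hg := hgap 1 le_rfl
      simp only [Nat.sub_self] at hg
      push_cast
      linarith [hg, hL0]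
    | succ m hm ih =>
      have hg := hgap (m + 1) (by omega)
      simp only [Nat.add_sub_cancel] at hg
      have hmul : ((m : ℝ) + 1) * (L (m + 1) - L m) ≤ ((m : ℝ) + 1) * (L (m + 2) - L (m + 1)) :=
        mul_le_mul_of_nonneg_left hg (by positivity)
      push_cast
      push_cast at ih
      nlinarith [ih, hmul]
  have hstep : ∀ n : ℕ, 1 ≤ n → L n / n ≤ L (n + 1) / (n + 1) := by
    intro n hn
    have hk := hkey n hn
    have hn0 : (0 : ℝ) < (n : ℝ) := by exact_mod_cast hn
    rw [div_le_div_iff₀ hn0 (by positivity)]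
    nlinarith [hk]
  have hratio : ∀ m n : ℕ, 1 ≤ m → m ≤ n → L m / m ≤ L n / n := by
    intro m n hm hmn
    induction n, hmn using Nat.le_induction with
    | base => exact le_rfl
    | succ k hk ih =>
      push_cast
      exact le_trans ih (hstep k (le_trans hm hk))
  -- c ν = exp (-(L ν / ν))
  have hc : ∀ ν : ℕ, 1 ≤ ν → a ν ^ (-(1 : ℝ) / ν) = Real.exp (-(L ν / ν)) := by
    intro ν hν
    rw [Real.rpow_def_of_pos (hpos ν)]
    congr 1
    field_simp [hLdef]
    simp [hLdef]
  have hant : ∀ m n : ℕ, m ≤ n →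
      a (n + 1) ^ (-(1 : ℝ) / (n + 1)) ≤ a (m + 1) ^ (-(1 : ℝ) / (m + 1)) := by
    intro m n hmn
    rw [show ((m : ℝ) + 1) = ((m + 1 : ℕ) : ℝ) by push_cast; ring,
        show ((n : ℝ) + 1) = ((n + 1 : ℕ) : ℝ) by push_cast; ring,
        hc (m + 1) (by omega), hc (n + 1) (by omega)]
    apply Real.exp_le_exp.2
    have := hratio (m + 1) (n + 1) (by omega) (by omega)
    linarith
  intro ε hε
  obtain ⟨N, hN⟩ := aux_nat_mul_tendsto
    (fun n => Real.rpow_nonneg (hpos (n + 1)).le _) hant hsum ε hε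
  -- for ν ≥ N + 1 : ν ! ≤ ε ^ ν * a ν
  have hbig : ∀ ν : ℕ, N + 1 ≤ ν → ((Nat.factorial ν : ℝ)) ≤ ε ^ ν * a ν := by
    intro ν hν
    have hν1 : 1 ≤ ν := by omega
    have hνR : (0 : ℝ) < (ν : ℝ) := by exact_mod_cast hν1
    obtain ⟨n, rfl⟩ : ∃ n, ν = n + 1 := ⟨ν - 1, by omega⟩
    have h1 := hN n (by omega)
    -- (n+1) * a(n+1)^(-(1)/(n+1)) ≤ ε
    have hcv : a (n + 1) ^ (-(1 : ℝ) / ((n : ℝ) + 1)) ≤ ε / ((n : ℝ) + 1) := by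
      rw [le_div_iff₀ (by positivity)]
      linarith [h1]
    -- deduce ((n+1)/ε) ≤ a(n+1)^(1/(n+1))
    have hpow : a (n + 1) ^ ((1 : ℝ) / ((n : ℝ) + 1)) > 0 := Real.rpow_pos_of_pos (hpos _) _
    have hinv : (a (n + 1) ^ ((1 : ℝ) / ((n : ℝ) + 1)))⁻¹ ≤ ε / ((n : ℝ) + 1) := by
      have hexp : (-(1 : ℝ)) / ((n : ℝ) + 1) = -((1 : ℝ) / ((n : ℝ) + 1)) := by ring
      rw [hexp, Real.rpow_neg (hpos _).le] at hcv
      exact hcv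
    have hge : ((n : ℝ) + 1) / ε ≤ a (n + 1) ^ ((1 : ℝ) / ((n : ℝ) + 1)) := by
      have h2 := mul_le_mul_of_nonneg_right hinv hpow.le
      rw [inv_mul_cancel₀ hpow.ne'] at h2
      have hn1 : (0 : ℝ) < (n : ℝ) + 1 := by positivity
      rw [div_mul_eq_mul_div, le_div_iff₀ hn1, one_mul] at h2
      rw [div_le_iff₀ hε]
      nlinarith [h2]
    -- raise to power (n+1)
    have hfinal : (((n : ℝ) + 1) / ε) ^ (n + 1) ≤ a (n + 1) := by
      have hb : (0 : ℝ) ≤ ((n : ℝ) + 1) / ε := by positivity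
      have h3 := Real.rpow_le_rpow hb hge (by positivity : (0 : ℝ) ≤ (n : ℝ) + 1)
      rw [← Real.rpow_mul (hpos _).le] at h3
      have h4 : (1 : ℝ) / ((n : ℝ) + 1) * ((n : ℝ) + 1) = 1 := by field_simp
      rw [h4, Real.rpow_one] at h3
      calc (((n : ℝ) + 1) / ε) ^ (n + 1)
          = (((n : ℝ) + 1) / ε) ^ (((n + 1 : ℕ) : ℝ)) := (Real.rpow_natCast _ _).symm
        _ = (((n : ℝ) + 1) / ε) ^ ((n : ℝ) + 1) := by norm_num
        _ ≤ a (n + 1) := h3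
    have hfact : ((Nat.factorial (n + 1) : ℝ)) ≤ ((n : ℝ) + 1) ^ (n + 1) := by
      have := Nat.factorial_le_pow (n + 1)
      exact_mod_cast this
    calc ((Nat.factorial (n + 1) : ℝ)) ≤ ((n : ℝ) + 1) ^ (n + 1) := hfact
      _ = ε ^ (n + 1) * (((n : ℝ) + 1) / ε) ^ (n + 1) := by
          rw [← mul_pow]; congr 1; field_simp
      _ ≤ ε ^ (n + 1) * a (n + 1) :=
          mul_le_mul_of_nonneg_left hfinal (pow_pos hε _).le
  -- define C
  have hden : ∀ ν : ℕ, (0 : ℝ) < ε ^ ν * a ν := fun ν => mul_pos (pow_pos hε ν) (hpos ν)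
  have hfac : ∀ ν : ℕ, (0 : ℝ) < (Nat.factorial ν : ℝ) := fun ν => by
    exact_mod_cast Nat.factorial_pos ν
  set C : ℝ := 1 + ∑ ν ∈ Finset.range (N + 1), (Nat.factorial ν : ℝ) / (ε ^ ν * a ν) with hCdef
  have hsum_nonneg : (0:ℝ) ≤ ∑ ν ∈ Finset.range (N + 1), (Nat.factorial ν : ℝ) / (ε ^ ν * a ν) :=
    Finset.sum_nonneg fun ν _ => div_nonneg (Nat.cast_nonneg _) (hden ν).le
  have hCpos : 0 < C := by rw [hCdef]; linarith
  have hbound : ∀ ν : ℕ, (Nat.factorial ν : ℝ) / (ε ^ ν * a ν) ≤ C := by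
    intro ν
    by_cases hcase : ν ≤ N
    · have hsingle := Finset.single_le_sum (f := fun i => (Nat.factorial i : ℝ) / (ε ^ i * a i))
        (fun i _ => div_nonneg (Nat.cast_nonneg _) (hden i).le)
        (Finset.mem_range.2 (Nat.lt_succ_of_le hcase))
      rw [hCdef]
      linarith [hsingle]
    · have h1 : (Nat.factorial ν : ℝ) / (ε ^ ν * a ν) ≤ 1 := by
        rw [div_le_one (hden ν)]
        exact hbig ν (by omega)
      rw [hCdef]
      linarith
  refine ⟨C, hCpos, fun r hr ν => ?_⟩
  have hεr : 0 ≤ ε * r := by positivity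
  have hexp := Real.pow_div_factorial_le_exp _ hεr ν
  have heq : r ^ ν / a ν = ((Nat.factorial ν : ℝ) / (ε ^ ν * a ν)) * ((ε * r) ^ ν / (Nat.factorial ν)) := by
    rw [mul_pow]
    field_simp [(hpos ν).ne', hε.ne', (hfac ν).ne']
  rw [heq]
  exact mul_le_mul (hbound ν) hexp (div_nonneg (pow_nonneg hεr ν) (Nat.cast_nonneg _)) hCpos.le
end

section
/- Let Ω : ℝ → ℝ be a nonnegative integrable function supported in [−(1+2δ), 1+2δ] with 0 < 1+2δ < π/3, Ω even, ∫Ω = 2(1+δ), and ∫_{t>1} Ω(t) dt ≥ δ/2 · 2 (i.e., ∫_{t>1}Ω ≥ δ). Then for ζ = ξ + iη ∈ ℂ with |ξ| < 1, the Laplace transform Ω̃(ζ) = ∫ e^{itζ} Ω(t) dt satisfies |Ω̃(ζ)| ≥ (δ/2)·e^{|η|}. -/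
open MeasureTheory Real

/-- For a nonnegative, even, integrable `Ω` supported in
`[−(1+2δ), 1+2δ]` with `1+2δ < π/3`, `∫Ω = 2(1+δ)` and `∫_{t>1} Ω ≥ δ`, the Laplace
transform `Ω̃(ζ) = ∫ e^{itζ} Ω(t) dt` satisfies `|Ω̃(ζ)| ≥ (δ/2)·e^{|Im ζ|}` for
`|Re ζ| < 1`. -/
theorem stmt_8 (δ : ℝ) (hδ : 0 < δ) (hπ : 1 + 2 * δ < Real.pi / 3)
    (Ω : ℝ → ℝ)
    (hnonneg : ∀ t, 0 ≤ Ω t)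
    (hint : Integrable Ω)
    (hsupp : Function.support Ω ⊆ Set.Icc (-(1 + 2 * δ)) (1 + 2 * δ))
    (heven : ∀ t, Ω (-t) = Ω t)
    (htotal : ∫ t, Ω t = 2 * (1 + δ))
    (htail : δ ≤ ∫ t in Set.Ioi (1 : ℝ), Ω t) :
    ∀ ζ : ℂ, |ζ.re| < 1 →
      δ / 2 * Real.exp |ζ.im| ≤
        ‖∫ t : ℝ, Complex.exp (Complex.I * t * ζ) * (Ω t : ℂ)‖ := by
  intro ζ hξ
  set ξ := ζ.re with hξdef
  set η := ζ.im with hηdef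
  have hK : (0:ℝ) < 1 + 2 * δ := by linarith
  -- the bound on support
  have habs : ∀ t, Ω t ≠ 0 → |t| ≤ 1 + 2 * δ := by
    intro t ht
    have := hsupp ht
    rw [abs_le]
    exact ⟨(Set.mem_Icc.mp this).1, (Set.mem_Icc.mp this).2⟩
  -- integrand and its real part
  set F : ℝ → ℂ := fun t => Complex.exp (Complex.I * t * ζ) * (Ω t : ℂ) with hFdef
  have hFre : ∀ t, (F t).re = Real.exp (-(t * η)) * Real.cos (t * ξ) * Ω t := by
    intro t
    have h1 : (Complex.I * t * ζ).re = -(t * η) := by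
      simp [Complex.mul_re, Complex.mul_im, hηdef]
    have h2 : (Complex.I * t * ζ).im = t * ξ := by
      simp [Complex.mul_re, Complex.mul_im, hξdef]
    simp [hFdef, Complex.mul_re, Complex.exp_re, Complex.exp_im, h1, h2]
  -- integrability of F
  have hmeasF : AEStronglyMeasurable F volume := by
    apply AEStronglyMeasurable.mul
    · exact (Complex.continuous_exp.comp (by continuity)).aestronglyMeasurable
    · exact Complex.continuous_ofReal.comp_aestronglyMeasurable hint.1
  have hFint : Integrable F := by
    apply Integrable.mono' (hint.const_mul (Real.exp (|η| * (1 + 2*δ)))) hmeasF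
    filter_upwards with t
    rcases eq_or_ne (Ω t) 0 with h0 | h0
    · simp [hFdef, h0, mul_nonneg (Real.exp_pos _).le (hnonneg t)]
    · have hb := habs t h0
      have hre : (Complex.I * t * ζ).re = -(t * η) := by
        simp [Complex.mul_re, Complex.mul_im, hηdef]
      have hnorm : ‖F t‖ = Real.exp (-(t*η)) * Ω t := by
        rw [hFdef]
        simp [norm_mul, Complex.norm_exp, hre, abs_of_nonneg (hnonneg t)]
      rw [hnorm]
      have hle : -(t*η) ≤ |η| * (1 + 2*δ) := by
        calc -(t*η) ≤ |t*η| := neg_le_abs _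
          _ = |t| * |η| := abs_mul t η
          _ ≤ (1 + 2*δ) * |η| := by gcongr
          _ = |η| * (1 + 2*δ) := mul_comm _ _
      exact mul_le_mul_of_nonneg_right (Real.exp_le_exp.mpr hle) (hnonneg t)
  -- the real part function
  set g : ℝ → ℝ := fun t => Real.exp (-(t * η)) * Real.cos (t * ξ) * Ω t with hgdef
  have hgint : Integrable g := by
    have := hFint.re
    simpa [hFre] using this
  -- cos bound on support
  have hcos : ∀ t, Ω t ≠ 0 → (1:ℝ)/2 ≤ Real.cos (t * ξ) := by
    intro t ht
    have hb := habs t ht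
    have h1 : |t * ξ| < Real.pi / 3 := by
      rw [abs_mul]
      calc |t| * |ξ| ≤ (1 + 2*δ) * |ξ| := by gcongr
        _ ≤ (1 + 2*δ) * 1 := by gcongr
        _ = 1 + 2*δ := mul_one _
        _ < Real.pi / 3 := hπ
    have := Real.cos_lt_cos_of_nonneg_of_le_pi (abs_nonneg (t * ξ))
      (by linarith [Real.pi_pos] : Real.pi / 3 ≤ Real.pi) h1
    rw [Real.cos_pi_div_three] at this
    rw [← Real.cos_abs]
    linarith
  -- pointwise: g t + g (-t) is bounded below by the indicator function
  set c : ℝ := Real.exp |η| / 2 with hcdef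
  set L : ℝ → ℝ := fun t => (Set.Ioi (1:ℝ)).indicator (fun t => c * Ω t) t
      + (Set.Iic (-1:ℝ)).indicator (fun t => c * Ω t) t with hLdef
  have hcpos : 0 < c := by positivity
  have hsum : ∀ t, g t + g (-t) = (Real.exp (-(t*η)) + Real.exp (t*η)) * Real.cos (t*ξ) * Ω t := by
    intro t
    simp only [hgdef]
    rw [heven t, show (-(-t*η)) = t*η by ring, show ((-t)*ξ) = -(t*ξ) by ring, Real.cos_neg]
    ring
  have hpt : ∀ t, L t ≤ g t + g (-t) := by
    intro t
    rw [hsum]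
    rcases eq_or_ne (Ω t) 0 with h0 | h0
    · simp [hLdef, h0, Set.indicator_apply]
    · have hc := hcos t h0
      have hΩ := hnonneg t
      have hexp : Real.exp (-(t*η)) + Real.exp (t*η) ≥ 0 := by positivity
      by_cases h1 : 1 < t
      · have h2 : ¬ t ≤ -1 := by linarith
        have hL : L t = c * Ω t := by simp [hLdef, Set.indicator_apply, h1, h2]
        rw [hL]
        have hE : Real.exp |η| ≤ Real.exp (-(t*η)) + Real.exp (t*η) := by
          rcases le_or_gt 0 η with hη | hη
          · calc Real.exp |η| = Real.exp η := by rw [abs_of_nonneg hη]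
              _ ≤ Real.exp (t*η) := by
                  apply Real.exp_le_exp.mpr; nlinarith
              _ ≤ _ := by linarith [Real.exp_pos (-(t*η))]
          · calc Real.exp |η| = Real.exp (-η) := by rw [abs_of_neg hη]
              _ ≤ Real.exp (-(t*η)) := by
                  apply Real.exp_le_exp.mpr; nlinarith
              _ ≤ _ := by linarith [Real.exp_pos (t*η)]
        calc c * Ω t = Real.exp |η| * (1/2) * Ω t := by rw [hcdef]; ring
          _ ≤ (Real.exp (-(t*η)) + Real.exp (t*η)) * Real.cos (t*ξ) * Ω t := by
              apply mul_le_mul_of_nonneg_right _ hΩ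
              apply mul_le_mul hE hc (by norm_num) hexp.le
      · by_cases h2 : t ≤ -1
        · have hL : L t = c * Ω t := by simp [hLdef, Set.indicator_apply, h1, h2]
          rw [hL]
          have hE : Real.exp |η| ≤ Real.exp (-(t*η)) + Real.exp (t*η) := by
            rcases le_or_gt 0 η with hη | hη
            · calc Real.exp |η| = Real.exp η := by rw [abs_of_nonneg hη]
                _ ≤ Real.exp (-(t*η)) := by
                    apply Real.exp_le_exp.mpr; nlinarith
                _ ≤ _ := by linarith [Real.exp_pos (t*η)]
            · calc Real.exp |η| = Real.exp (-η) := by rw [abs_of_neg hη]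
                _ ≤ Real.exp (t*η) := by
                    apply Real.exp_le_exp.mpr; nlinarith
                _ ≤ _ := by linarith [Real.exp_pos (-(t*η))]
          calc c * Ω t = Real.exp |η| * (1/2) * Ω t := by rw [hcdef]; ring
            _ ≤ (Real.exp (-(t*η)) + Real.exp (t*η)) * Real.cos (t*ξ) * Ω t := by
                apply mul_le_mul_of_nonneg_right _ hΩ
                apply mul_le_mul hE hc (by norm_num) hexp.le
        · have hL : L t = 0 := by simp [hLdef, Set.indicator_apply, h1, h2]
          rw [hL]
          positivity
  -- integral of L
  have hLint1 : Integrable ((Set.Ioi (1:ℝ)).indicator (fun t => c * Ω t)) :=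
    (hint.const_mul c).indicator measurableSet_Ioi
  have hLint2 : Integrable ((Set.Iic (-1:ℝ)).indicator (fun t => c * Ω t)) :=
    (hint.const_mul c).indicator measurableSet_Iic
  have hLint : Integrable L := hLint1.add hLint2
  have hIioeq : (∫ t in Set.Iic (-1:ℝ), Ω t) = ∫ t in Set.Ioi (1:ℝ), Ω t := by
    rw [← integral_comp_neg_Ioi]
    simp [heven]
  have hLval : (∫ t, L t) = 2 * c * ∫ t in Set.Ioi (1:ℝ), Ω t := by
    rw [hLdef]
    rw [integral_add hLint1 hLint2, integral_indicator measurableSet_Ioi,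
      integral_indicator measurableSet_Iic]
    rw [integral_const_mul, integral_const_mul, hIioeq]
    ring
  -- the chain
  have hgneg : Integrable (fun t => g (-t)) := hgint.comp_neg
  have h2g : (∫ t, g t) + (∫ t, g t) = ∫ t, (g t + g (-t)) := by
    rw [integral_add hgint hgneg]
    congr 1
    exact (integral_neg_eq_self g volume).symm
  have hmono : (∫ t, L t) ≤ ∫ t, (g t + g (-t)) :=
    integral_mono hLint (hgint.add hgneg) hpt
  have hglower : δ / 2 * Real.exp |η| ≤ ∫ t, g t := by
    have h1 : 2 * c * δ ≤ ∫ t, L t := by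
      rw [hLval]
      nlinarith [hcpos]
    nlinarith [hmono, h2g, Real.exp_pos |η|]
  -- conclude
  calc δ / 2 * Real.exp |η| ≤ ∫ t, g t := hglower
    _ = (∫ t, F t).re := by
        rw [← RCLike.re_to_complex, ← integral_re hFint]
        simp [RCLike.re_to_complex, hFre, hgdef]
    _ ≤ |(∫ t, F t).re| := le_abs_self _
    _ ≤ ‖∫ t, F t‖ := Complex.abs_re_le_norm _
end

section
/- Let W ⋐ V be cones in ℝ^d with V open (W compactly contained in V). Then the dual cone V* = {x : ⟨x, η⟩ ≥ 0 for all η ∈ V} is compactly contained in the interior of W* = {x : ⟨x, η⟩ ≥ 0 for all η ∈ W}. -/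
open scoped RealInnerProductSpace

/-- If `W ⋐ V` are cones in `ℝ^d` with `V` open and nonempty, then the
dual cone `V*` is compactly contained in the interior of `W*`: since `V*` is closed,
this reads `V* \ {0} ⊆ Int W*`. -/
theorem stmt_12 (d : ℕ) (W V : Set (EuclideanSpace ℝ (Fin d)))
    (hVopen : IsOpen V) (hVne : V.Nonempty)
    (hWcone : ∀ x ∈ W, ∀ t : ℝ, 0 < t → t • x ∈ W)
    (hVcone : ∀ x ∈ V, ∀ t : ℝ, 0 < t → t • x ∈ V)
    (hcomp : closure W \ {0} ⊆ V) :
    {x : EuclideanSpace ℝ (Fin d) | ∀ η ∈ V, 0 ≤ ⟪x, η⟫} \ {0} ⊆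
      interior {x : EuclideanSpace ℝ (Fin d) | ∀ η ∈ W, 0 ≤ ⟪x, η⟫} := by
  rintro x ⟨hxdual, hx0⟩
  have hxne : x ≠ 0 := hx0
  -- strict positivity on V
  have hpos : ∀ η ∈ V, 0 < ⟪x, η⟫ := by
    intro η hη
    rcases lt_or_eq_of_le (hxdual η hη) with h | h
    · exact h
    exfalso
    have hc : Continuous (fun t : ℝ => η - t • x) :=
      continuous_const.sub (continuous_id.smul continuous_const)
    have hmem : (0 : ℝ) ∈ (fun t : ℝ => η - t • x) ⁻¹' V := by
      simp [hη]
    have hopen : IsOpen ((fun t : ℝ => η - t • x) ⁻¹' V) := hVopen.preimage hc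
    obtain ⟨ε, hε, hball⟩ := Metric.isOpen_iff.1 hopen 0 hmem
    have hεmem : (ε / 2) ∈ Metric.ball (0 : ℝ) ε := by
      rw [Metric.mem_ball, Real.dist_eq, sub_zero, abs_of_pos (half_pos hε)]
      linarith
    have h2 : η - (ε / 2) • x ∈ V := hball hεmem
    have h3 := hxdual _ h2
    rw [inner_sub_right, inner_smul_right, ← h, real_inner_self_eq_norm_sq] at h3
    have hxnorm : 0 < ‖x‖ := norm_pos_iff.2 hxne
    have hxn : 0 < ‖x‖ ^ 2 := by positivity
    nlinarith [half_pos hε]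
  set K := closure W ∩ Metric.sphere (0 : EuclideanSpace ℝ (Fin d)) 1 with hK
  have hKcomp : IsCompact K :=
    (isCompact_sphere (0 : EuclideanSpace ℝ (Fin d)) 1).inter_left isClosed_closure
  have hKV : ∀ u ∈ K, u ∈ V := by
    rintro u ⟨hu1, hu2⟩
    refine hcomp ⟨hu1, ?_⟩
    simp only [Set.mem_singleton_iff]
    intro h
    rw [h] at hu2
    simp at hu2
  obtain ⟨c, hcpos, hcmin⟩ : ∃ c > 0, ∀ u ∈ K, c ≤ ⟪x, u⟫ := by
    rcases K.eq_empty_or_nonempty with hKe | hKne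
    · exact ⟨1, one_pos, by simp [hKe]⟩
    · have hf : ContinuousOn (fun u : EuclideanSpace ℝ (Fin d) => ⟪x, u⟫) K :=
        (continuous_const.inner continuous_id).continuousOn
      obtain ⟨u₀, hu₀K, hu₀min⟩ := hKcomp.exists_isMinOn hKne hf
      exact ⟨⟪x, u₀⟫, hpos u₀ (hKV u₀ hu₀K), fun u hu => isMinOn_iff.1 hu₀min u hu⟩
  rw [mem_interior]
  refine ⟨Metric.ball x c, ?_, Metric.isOpen_ball, Metric.mem_ball_self hcpos⟩
  intro y hy η hη
  rcases eq_or_ne η 0 with rfl | hηne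
  · simp
  · have hηn : 0 < ‖η‖ := norm_pos_iff.2 hηne
    set u := ‖η‖⁻¹ • η with hu
    have huK : u ∈ K := by
      constructor
      · exact subset_closure (hWcone η hη _ (inv_pos.2 hηn))
      · simp [hu, norm_smul, abs_of_pos (inv_pos.2 hηn), inv_mul_cancel₀ hηn.ne']
    have hCS : ⟪x - y, u⟫ ≤ ‖x - y‖ := by
      calc ⟪x - y, u⟫ ≤ ‖x - y‖ * ‖u‖ := real_inner_le_norm _ _
        _ = ‖x - y‖ := by
            have : ‖u‖ = 1 := by simpa using huK.2
            rw [this, mul_one]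
    have hxy : ‖x - y‖ < c := by
      rw [← dist_eq_norm, dist_comm]
      exact Metric.mem_ball.1 hy
    have hyu : 0 < ⟪y, u⟫ := by
      have h1 : c ≤ ⟪x, u⟫ := hcmin u huK
      have h2 : ⟪x, u⟫ - ⟪y, u⟫ = ⟪x - y, u⟫ := (inner_sub_left _ _ _).symm
      linarith
    have heq : ‖η‖ * ⟪y, u⟫ = ⟪y, η⟫ := by
      rw [hu, inner_smul_right, ← mul_assoc, mul_inv_cancel₀ hηn.ne', one_mul]
    rw [← heq]
    positivity
end

section
/- Let U', U be open cones in a normed space and let T_R^U = {ζ ∈ ℂ^d : |ζ| < R, Im ζ ∈ U}. For R' > R, N' < N, U' ⊋ U with U ⋐ U', the inclusion map from the Banach space A_{0,R',N'}(U') of analytic functions on T_{R'}^{U'} with norm sup |Im ζ|^{N'}|u(ζ)| into A_{0,R,N}(U) with norm sup_{ζ∈T_R^U} |Im ζ|^N |u(ζ)| is a compact operator. -/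
open Filter

/-- The imaginary part of a point of `ℂ^d`, as a point of `ℝ^d`. -/
noncomputable def imPart (d : ℕ) (ζ : EuclideanSpace ℂ (Fin d)) :
    EuclideanSpace ℝ (Fin d) :=
  (WithLp.equiv 2 (Fin d → ℝ)).symm fun j => (ζ j).im

/-- The truncated tube `T_R^U = {ζ ∈ ℂ^d : |ζ| < R, Im ζ ∈ U}`. -/
def tube (d : ℕ) (U : Set (EuclideanSpace ℝ (Fin d))) (R : ℝ) :
    Set (EuclideanSpace ℂ (Fin d)) :=
  {ζ | ‖ζ‖ < R ∧ imPart d ζ ∈ U}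


open Metric Set Topology

lemma imPart_apply (d : ℕ) (ζ : EuclideanSpace ℂ (Fin d)) (j : Fin d) :
    imPart d ζ j = (ζ j).im := rfl

lemma imPart_sub (d : ℕ) (a b : EuclideanSpace ℂ (Fin d)) :
    imPart d (a - b) = imPart d a - imPart d b := by
  ext j
  simp [imPart_apply]

lemma norm_imPart_le (d : ℕ) (ζ : EuclideanSpace ℂ (Fin d)) :
    ‖imPart d ζ‖ ≤ ‖ζ‖ := by
  rw [EuclideanSpace.norm_eq, EuclideanSpace.norm_eq]
  apply Real.sqrt_le_sqrt
  apply Finset.sum_le_sum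
  intro j _
  rw [imPart_apply]
  have h1 : ‖(ζ j).im‖ ≤ ‖ζ j‖ := by
    rw [Real.norm_eq_abs]
    exact Complex.abs_im_le_norm _
  exact pow_le_pow_left₀ (norm_nonneg _) h1 2

lemma continuous_imPart (d : ℕ) : Continuous (imPart d) := by
  apply continuous_iff_continuousAt.mpr
  intro x
  rw [Metric.continuousAt_iff]
  intro ε hε
  refine ⟨ε, hε, fun {y} hy => ?_⟩
  rw [dist_eq_norm] at hy ⊢
  rw [← imPart_sub]
  exact lt_of_le_of_lt (norm_imPart_le d _) hy


variable {E : Type*} [NormedAddCommGroup E] [NormedSpace ℂ E]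

lemma schwarz_lip {g : E → ℂ} {c : E} {r M : ℝ} (hr : 0 < r)
    (hd : DifferentiableOn ℂ g (ball c r)) (hM : ∀ z ∈ ball c r, ‖g z‖ ≤ M)
    {z : E} (hz : z ∈ ball c r) : ‖g z - g c‖ ≤ (2 * M + 1) / r * ‖z - c‖ := by
  have hM0 : 0 ≤ M := le_trans (norm_nonneg _) (hM c (mem_ball_self hr))
  rcases eq_or_ne z c with rfl | hne
  · simp
  set w := z - c with hw
  have hw0 : ‖w‖ ≠ 0 := by simpa [hw, sub_eq_zero] using hne
  have hwpos : 0 < ‖w‖ := (norm_nonneg w).lt_of_ne' hw0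
  set ρ := r / ‖w‖ with hρ
  have hρpos : 0 < ρ := div_pos hr hwpos
  set L : ℂ → E := fun t => c + t • w with hL
  have hmaps : MapsTo L (ball (0:ℂ) ρ) (ball c r) := by
    intro t ht
    simp only [hL, mem_ball, dist_eq_norm] at ht ⊢
    have : ‖t • w‖ < r := by
      rw [norm_smul]
      calc ‖t‖ * ‖w‖ < ρ * ‖w‖ := by
            apply mul_lt_mul_of_pos_right _ hwpos
            simpa using ht
        _ = r := by rw [hρ, div_mul_cancel₀ _ hwpos.ne']
    simpa [add_sub_cancel_left] using this
  have hdh : DifferentiableOn ℂ (g ∘ L) (ball (0:ℂ) ρ) := by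
    apply hd.comp _ hmaps
    exact (differentiable_id.smul_const w).const_add c |>.differentiableOn
  have hmaps2 : MapsTo (g ∘ L) (ball (0:ℂ) ρ) (ball ((g ∘ L) 0) (2 * M + 1)) := by
    intro t ht
    have h1 : ‖g (L t)‖ ≤ M := hM _ (hmaps ht)
    have h2 : ‖g (L 0)‖ ≤ M := hM _ (hmaps (mem_ball_self hρpos))
    simp only [mem_ball, Function.comp_apply, dist_eq_norm]
    calc ‖g (L t) - g (L 0)‖ ≤ ‖g (L t)‖ + ‖g (L 0)‖ := norm_sub_le _ _
      _ < 2 * M + 1 := by linarith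
  have h1 : (1:ℂ) ∈ ball (0:ℂ) ρ := by
    simp only [mem_ball, dist_zero_right, norm_one]
    rw [hρ, lt_div_iff₀ hwpos, one_mul]
    simpa [hw, dist_eq_norm] using hz
  have := Complex.dist_le_div_mul_dist_of_mapsTo_ball hdh (hmaps2.mono_right ball_subset_closedBall) h1
  simp only [Function.comp_apply, hL, one_smul, zero_smul, add_zero, dist_eq_norm] at this
  have hzz : c + w = z := by simp [hw]
  rw [hzz] at this
  calc ‖g z - g c‖ ≤ (2 * M + 1) / ρ * ‖(1:ℂ) - 0‖ := this
    _ = (2 * M + 1) / r * ‖z - c‖ := by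
        simp only [sub_zero, norm_one, mul_one, hρ, ← hw]
        field_simp

lemma schwarz_fderiv_aux {g : E → ℂ} {c : E} {r M ε : ℝ} (hr : 0 < r) (hε : 0 < ε)
    (hd : DifferentiableOn ℂ g (ball c r)) (hM : ∀ z ∈ ball c r, ‖g z‖ ≤ M) :
    ‖fderiv ℂ g c‖ ≤ (2 * M + ε) / r := by
  have hM0 : 0 ≤ M := le_trans (norm_nonneg _) (hM c (mem_ball_self hr))
  apply ContinuousLinearMap.opNorm_le_bound _ (by positivity)
  intro w
  rcases eq_or_ne w 0 with rfl | hw0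
  · simp
  have hwpos : 0 < ‖w‖ := norm_pos_iff.mpr hw0
  set ρ := r / ‖w‖ with hρ
  have hρpos : 0 < ρ := div_pos hr hwpos
  set L : ℂ → E := fun t => c + t • w with hL
  have hmaps : MapsTo L (ball (0:ℂ) ρ) (ball c r) := by
    intro t ht
    simp only [hL, mem_ball, dist_eq_norm] at ht ⊢
    have : ‖t • w‖ < r := by
      rw [norm_smul]
      calc ‖t‖ * ‖w‖ < ρ * ‖w‖ := by
            apply mul_lt_mul_of_pos_right _ hwpos
            simpa using ht
        _ = r := by rw [hρ, div_mul_cancel₀ _ hwpos.ne']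
    simpa [add_sub_cancel_left] using this
  have hdh : DifferentiableOn ℂ (g ∘ L) (ball (0:ℂ) ρ) := by
    apply hd.comp _ hmaps
    exact (differentiable_id.smul_const w).const_add c |>.differentiableOn
  have hmaps2 : MapsTo (g ∘ L) (ball (0:ℂ) ρ) (ball ((g ∘ L) 0) (2 * M + ε)) := by
    intro t ht
    have h1 : ‖g (L t)‖ ≤ M := hM _ (hmaps ht)
    have h2 : ‖g (L 0)‖ ≤ M := hM _ (hmaps (mem_ball_self hρpos))
    simp only [mem_ball, Function.comp_apply, dist_eq_norm]
    calc ‖g (L t) - g (L 0)‖ ≤ ‖g (L t)‖ + ‖g (L 0)‖ := norm_sub_le _ _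
      _ < 2 * M + ε := by linarith
  have hds : HasDerivAt (g ∘ L) (fderiv ℂ g c w) 0 := by
    have hgc : DifferentiableAt ℂ g c :=
      hd.differentiableAt (isOpen_ball.mem_nhds (mem_ball_self hr))
    have hLd : HasDerivAt L w 0 := by
      simpa only [id, one_smul] using ((hasDerivAt_id (0:ℂ)).smul_const w).const_add c
    have hL0 : L 0 = c := by simp [hL]
    have hgc' : HasFDerivAt g (fderiv ℂ g c) (L 0) := by rw [hL0]; exact hgc.hasFDerivAt
    exact hgc'.comp_hasDerivAt 0 hLd
  have := Complex.norm_deriv_le_div_of_mapsTo_ball hdh (hmaps2.mono_right ball_subset_closedBall) hρpos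
  rw [hds.deriv] at this
  calc ‖fderiv ℂ g c w‖ ≤ (2 * M + ε) / ρ := this
    _ = (2 * M + ε) / r * ‖w‖ := by rw [hρ]; field_simp

lemma schwarz_fderiv {g : E → ℂ} {c : E} {r M : ℝ} (hr : 0 < r)
    (hd : DifferentiableOn ℂ g (ball c r)) (hM : ∀ z ∈ ball c r, ‖g z‖ ≤ M) :
    ‖fderiv ℂ g c‖ ≤ 2 * M / r := by
  apply le_of_forall_pos_le_add
  intro δ hδ
  have := schwarz_fderiv_aux hr (mul_pos hδ hr) hd hM
  calc ‖fderiv ℂ g c‖ ≤ (2 * M + δ * r) / r := this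
    _ = 2 * M / r + δ := by field_simp

lemma montel {E : Type*} [NormedAddCommGroup E] [NormedSpace ℂ E] [ProperSpace E]
    [SecondCountableTopology E]
    {Ω : Set E} (hΩ : IsOpen Ω) (f : ℕ → E → ℂ)
    (hdiff : ∀ n, DifferentiableOn ℂ (f n) Ω)
    (hloc : ∀ ζ, ∀ hζ : ζ ∈ Ω, ∃ r M, 0 < r ∧ ball ζ (2*r) ⊆ Ω ∧
      ∀ n, ∀ z ∈ ball ζ (2*r), ‖f n z‖ ≤ M) :
    ∃ φ : ℕ → ℕ, StrictMono φ ∧ ∃ v : E → ℂ,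
      TendstoLocallyUniformlyOn (fun n => f (φ n)) v atTop Ω ∧
      DifferentiableOn ℂ v Ω := by
  classical
  by_cases hne : Ω.Nonempty
  swap
  · refine ⟨id, strictMono_id, 0, ?_, ?_⟩
    · intro u hu x hx
      exact absurd ⟨x, hx⟩ hne
    · intro x hx
      exact absurd ⟨x, hx⟩ hne
  haveI : Nonempty ↥Ω := hne.to_subtype
  obtain ⟨D, hD⟩ := TopologicalSpace.exists_dense_seq ↥Ω
  choose r M hr hsub hbd using hloc
  -- pointwise bounds at the dense points
  set Mk : ℕ → ℝ := fun k => M (D k) (D k).2 with hMk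
  have hGk : ∀ n k, f n (D k) ∈ closedBall (0:ℂ) (Mk k) := by
    intro n k
    rw [mem_closedBall, dist_zero_right]
    exact hbd (D k) (D k).2 n _ (mem_ball_self (by linarith [hr (D k) (D k).2]))
  -- extraction by sequential compactness of the product
  have hS : IsCompact (Set.pi (univ : Set ℕ) fun k => closedBall (0:ℂ) (Mk k)) :=
    isCompact_univ_pi fun k => isCompact_closedBall _ _
  obtain ⟨L, -, φ, hφ, hGconv⟩ :=
    hS.isSeqCompact (x := fun n k => f n (D k)) (fun n => by
      intro k _; exact hGk n k)
  have hpt : ∀ k, Tendsto (fun n => f (φ n) (D k)) atTop (𝓝 (L k)) := by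
    intro k
    exact (tendsto_pi_nhds.mp hGconv) k
  -- locally uniform Cauchy
  have hcauchy : ∀ ζ₀, ∀ hζ₀ : ζ₀ ∈ Ω,
      UniformCauchySeqOn (fun n => f (φ n)) atTop (closedBall ζ₀ (r ζ₀ hζ₀ / 2)) := by
    intro ζ₀ hζ₀
    set r₀ := r ζ₀ hζ₀ with hr₀def
    have hr₀ : 0 < r₀ := hr ζ₀ hζ₀
    set M₀ := max (M ζ₀ hζ₀) 0 with hM₀def
    have hM₀ : 0 ≤ M₀ := le_max_right _ _
    set C := (2 * M₀ + 1) / r₀ with hCdef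
    have hC : 0 < C := by positivity
    have hbd' : ∀ n, ∀ z ∈ ball ζ₀ (2*r₀), ‖f n z‖ ≤ M₀ :=
      fun n z hz => (hbd ζ₀ hζ₀ n z hz).trans (le_max_left _ _)
    -- uniform Lipschitz estimate
    have hlip : ∀ i, ∀ z₁ ∈ ball ζ₀ r₀, ∀ z₂ ∈ ball z₁ r₀,
        ‖f i z₂ - f i z₁‖ ≤ C * ‖z₂ - z₁‖ := by
      intro i z₁ hz₁ z₂ hz₂
      have hball : ball z₁ r₀ ⊆ ball ζ₀ (2*r₀) := by
        intro w hw
        rw [mem_ball] at hw hz₁ ⊢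
        calc dist w ζ₀ ≤ dist w z₁ + dist z₁ ζ₀ := dist_triangle _ _ _
          _ < r₀ + r₀ := add_lt_add hw hz₁
          _ = 2 * r₀ := by ring
      exact schwarz_lip hr₀ ((hdiff i).mono (hball.trans (hsub ζ₀ hζ₀)))
        (fun z hz => hbd' i z (hball hz)) hz₂
    rw [Metric.uniformCauchySeqOn_iff]
    intro ε hε
    set ρ := min (r₀/2) (ε/(8*C+1)) with hρdef
    have hρ : 0 < ρ := lt_min (by linarith) (by positivity)
    -- cover the closed ball by finitely many balls around dense points
    have hKΩ : closedBall ζ₀ (r₀/2) ⊆ Ω := by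
      intro z hz
      apply hsub ζ₀ hζ₀
      rw [mem_ball]
      rw [mem_closedBall] at hz
      linarith
    have hcov : closedBall ζ₀ (r₀/2) ⊆
        ⋃ k : {k : ℕ // dist ((D k : E)) ζ₀ < r₀}, ball ((D k.1 : E)) ρ := by
      intro z hz
      obtain ⟨k, hk⟩ := hD.exists_dist_lt (⟨z, hKΩ hz⟩ : ↥Ω) hρ
      rw [Subtype.dist_eq] at hk
      have hk' : dist ((D k : E)) z < ρ := by rw [dist_comm]; exact hk
      have hdk : dist ((D k : E)) ζ₀ < r₀ := by
        rw [mem_closedBall] at hz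
        calc dist ((D k : E)) ζ₀ ≤ dist ((D k : E)) z + dist z ζ₀ := dist_triangle _ _ _
          _ < ρ + r₀/2 := add_lt_add_of_lt_of_le hk' hz
          _ ≤ r₀/2 + r₀/2 := by
              have := min_le_left (r₀/2) (ε/(8*C+1))
              linarith
          _ = r₀ := by ring
      refine mem_iUnion.mpr ⟨⟨k, hdk⟩, ?_⟩
      rw [mem_ball]
      exact hk
    obtain ⟨t, ht⟩ := (isCompact_closedBall ζ₀ (r₀/2)).elim_finite_subcover
      (fun k : {k : ℕ // dist ((D k : E)) ζ₀ < r₀} => ball ((D k.1 : E)) ρ)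
      (fun k => isOpen_ball) hcov
    -- eventual closeness at the finitely many centers
    have hev : ∀ᶠ n in atTop, ∀ k ∈ t, dist (f (φ n) ((D k.1 : E))) (L k.1) < ε/4 := by
      rw [eventually_all_finset]
      intro k _
      have : Tendsto (fun n => f (φ n) ((D k.1 : E))) atTop (𝓝 (L k.1)) := hpt k.1
      exact this (Metric.ball_mem_nhds _ (by positivity))
    obtain ⟨Nb, hNb⟩ := eventually_atTop.mp hev
    refine ⟨Nb, fun m hm n hn z hz => ?_⟩
    obtain ⟨k, hkt, hzk⟩ : ∃ k ∈ t, z ∈ ball ((D k.1 : E)) ρ := by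
      have := ht hz
      rw [mem_iUnion₂] at this
      obtain ⟨k, hk1, hk2⟩ := this
      exact ⟨k, hk1, hk2⟩
    have hDkb : (D k.1 : E) ∈ ball ζ₀ r₀ := k.2
    have hzb : z ∈ ball ((D k.1 : E)) r₀ := by
      apply ball_subset_ball _ hzk
      calc ρ ≤ r₀/2 := min_le_left _ _
        _ ≤ r₀ := by linarith
    have hzρ : ‖z - (D k.1 : E)‖ < ρ := by
      rw [← dist_eq_norm]
      exact hzk
    have hCρ : C * ‖z - (D k.1 : E)‖ ≤ ε/8 := by
      have h1 : C * ‖z - (D k.1 : E)‖ ≤ C * ρ :=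
        mul_le_mul_of_nonneg_left hzρ.le hC.le
      have h2 : C * ρ ≤ C * (ε/(8*C+1)) :=
        mul_le_mul_of_nonneg_left (min_le_right _ _) hC.le
      have h3 : C * (ε/(8*C+1)) ≤ ε/8 := by
        have heq : C * (ε/(8*C+1)) = C * ε / (8*C+1) := by ring
        rw [heq, div_le_div_iff₀ (by positivity) (by norm_num : (0:ℝ) < 8)]
        nlinarith [hC.le, hε.le]
      linarith
    have e1 : ‖f (φ m) z - f (φ m) ((D k.1 : E))‖ ≤ ε/8 :=
      (hlip (φ m) _ hDkb _ hzb).trans hCρ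
    have e2 : ‖f (φ n) z - f (φ n) ((D k.1 : E))‖ ≤ ε/8 :=
      (hlip (φ n) _ hDkb _ hzb).trans hCρ
    have e3 : dist (f (φ m) ((D k.1 : E))) (L k.1) < ε/4 := hNb m hm k hkt
    have e4 : dist (f (φ n) ((D k.1 : E))) (L k.1) < ε/4 := hNb n hn k hkt
    calc dist (f (φ m) z) (f (φ n) z)
        ≤ dist (f (φ m) z) (f (φ m) ((D k.1 : E)))
          + dist (f (φ m) ((D k.1 : E))) (f (φ n) ((D k.1 : E)))
          + dist (f (φ n) ((D k.1 : E))) (f (φ n) z) := dist_triangle4 _ _ _ _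
      _ ≤ ε/8 + (ε/4 + ε/4) + ε/8 := by
          gcongr
          · rw [dist_eq_norm]; exact e1
          · calc dist (f (φ m) ((D k.1 : E))) (f (φ n) ((D k.1 : E)))
                ≤ dist (f (φ m) ((D k.1 : E))) (L k.1)
                  + dist (L k.1) (f (φ n) ((D k.1 : E))) := dist_triangle _ _ _
              _ ≤ ε/4 + ε/4 := by
                  rw [dist_comm (L k.1)]
                  exact add_le_add e3.le e4.le
          · rw [dist_comm, dist_eq_norm]; exact e2
      _ < ε := by linarith
  -- pointwise limit
  set v : E → ℂ := fun z => limUnder atTop (fun n => f (φ n) z) with hv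
  have hptc : ∀ z, ∀ hz : z ∈ Ω, CauchySeq (fun n => f (φ n) z) := by
    intro z hz
    have := hcauchy z hz
    rw [Metric.uniformCauchySeqOn_iff] at this
    rw [Metric.cauchySeq_iff]
    intro ε hε
    obtain ⟨Nb, hNb⟩ := this ε hε
    exact ⟨Nb, fun m hm n hn =>
      hNb m hm n hn z (mem_closedBall_self (by linarith [hr z hz]))⟩
  have hvpt : ∀ z ∈ Ω, Tendsto (fun n => f (φ n) z) atTop (𝓝 (v z)) :=
    fun z hz => (hptc z hz).tendsto_limUnder
  have htuo : ∀ ζ₀, ∀ hζ₀ : ζ₀ ∈ Ω,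
      TendstoUniformlyOn (fun n => f (φ n)) v atTop (closedBall ζ₀ (r ζ₀ hζ₀ / 2)) := by
    intro ζ₀ hζ₀
    apply (hcauchy ζ₀ hζ₀).tendstoUniformlyOn_of_tendsto
    intro z hz
    apply hvpt
    apply hsub ζ₀ hζ₀
    rw [mem_ball]
    rw [mem_closedBall] at hz
    have := hr ζ₀ hζ₀
    linarith
  refine ⟨φ, hφ, v, ?_, ?_⟩
  · intro u hu x hx
    refine ⟨closedBall x (r x hx / 2), ?_, ?_⟩
    · exact Filter.mem_of_superset (nhdsWithin_le_nhds
        (closedBall_mem_nhds x (by linarith [hr x hx]))) (fun y hy => hy)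
    · exact htuo x hx u hu
  · -- differentiability of the limit
    intro x hx
    set r₀ := r x hx with hr₀def
    have hr₀ : 0 < r₀ := hr x hx
    set s := ball x (r₀/4) with hs
    have hsΩ : s ⊆ Ω := by
      intro z hz
      apply hsub x hx
      rw [mem_ball] at hz ⊢
      linarith
    have hKΩ' : closedBall x (r₀/2) ⊆ Ω := by
      intro z hz
      apply hsub x hx
      rw [mem_ball]
      rw [mem_closedBall] at hz
      linarith
    set f' : ℕ → E → (E →L[ℂ] ℂ) := fun n z => fderiv ℂ (f (φ n)) z with hf'
    have hf'c : UniformCauchySeqOn f' atTop s := by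
      rw [Metric.uniformCauchySeqOn_iff]
      intro ε hε
      have := hcauchy x hx
      rw [Metric.uniformCauchySeqOn_iff] at this
      obtain ⟨Nb, hNb⟩ := this (ε * r₀ / 16) (by positivity)
      refine ⟨Nb, fun m hm n hn z hz => ?_⟩
      have hzb : ball z (r₀/4) ⊆ closedBall x (r₀/2) := by
        intro w hw
        rw [mem_ball] at hw hz
        rw [mem_closedBall]
        calc dist w x ≤ dist w z + dist z x := dist_triangle _ _ _
          _ ≤ r₀/4 + r₀/4 := by linarith
          _ ≤ r₀/2 := by linarith
      have hgd : DifferentiableOn ℂ (fun w => f (φ m) w - f (φ n) w) (ball z (r₀/4)) := by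
        apply DifferentiableOn.sub
        · exact (hdiff (φ m)).mono (fun w hw => hKΩ' (hzb hw))
        · exact (hdiff (φ n)).mono (fun w hw => hKΩ' (hzb hw))
      have hgbd : ∀ w ∈ ball z (r₀/4), ‖f (φ m) w - f (φ n) w‖ ≤ ε * r₀ / 16 := by
        intro w hw
        have := hNb m hm n hn w (hzb hw)
        rw [dist_eq_norm] at this
        exact this.le
      have hfd := schwarz_fderiv (by positivity : (0:ℝ) < r₀/4) hgd hgbd
      have hdm : DifferentiableAt ℂ (f (φ m)) z :=
        (hdiff (φ m)).differentiableAt (hΩ.mem_nhds (hsΩ hz))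
      have hdn : DifferentiableAt ℂ (f (φ n)) z :=
        (hdiff (φ n)).differentiableAt (hΩ.mem_nhds (hsΩ hz))
      have hsubst : fderiv ℂ (fun w => f (φ m) w - f (φ n) w) z = f' m z - f' n z :=
        fderiv_sub hdm hdn
      rw [hsubst] at hfd
      rw [dist_eq_norm]
      calc ‖f' m z - f' n z‖ ≤ 2 * (ε * r₀ / 16) / (r₀/4) := hfd
        _ = ε / 2 := by field_simp; ring
        _ < ε := by linarith
    set g' : E → (E →L[ℂ] ℂ) := fun z => limUnder atTop (fun n => f' n z) with hg'
    have hg'pt : ∀ z ∈ s, Tendsto (fun n => f' n z) atTop (𝓝 (g' z)) := by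
      intro z hz
      apply CauchySeq.tendsto_limUnder
      have := hf'c
      rw [Metric.uniformCauchySeqOn_iff] at this
      rw [Metric.cauchySeq_iff]
      intro ε hε
      obtain ⟨Nb, hNb⟩ := this ε hε
      exact ⟨Nb, fun m hm n hn => hNb m hm n hn z hz⟩
    have htuo' : TendstoUniformlyOn f' g' atTop s :=
      hf'c.tendstoUniformlyOn_of_tendsto hg'pt
    have key : HasFDerivAt v (g' x) x := by
      apply hasFDerivAt_of_tendstoUniformlyOn isOpen_ball htuo'
        (fun n z hz =>
          ((hdiff (φ n)).differentiableAt (hΩ.mem_nhds (hsΩ hz))).hasFDerivAt)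
        (fun z hz => hvpt z (hsΩ hz))
      exact mem_ball_self (by positivity)
    exact key.differentiableAt.differentiableWithinAt

/-- for `R' > R`, `N' < N` and open cones `U ⋐ U'`, the inclusion
`A_{0,R',N'}(U') → A_{0,R,N}(U)` is a compact operator: every sequence in the unit ball
of `A_{0,R',N'}(U')` has a subsequence converging in the norm of `A_{0,R,N}(U)` to a
function analytic on the smaller tube. -/
theorem stmt_18 (d : ℕ) (U U' : Set (EuclideanSpace ℝ (Fin d)))
    (hUopen : IsOpen U) (hU'open : IsOpen U')
    (hUcone : ∀ x ∈ U, ∀ t : ℝ, 0 < t → t • x ∈ U)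
    (hU'cone : ∀ x ∈ U', ∀ t : ℝ, 0 < t → t • x ∈ U')
    (hUU' : U ⊆ U') (hUne : U ≠ U') (hcomp : closure U \ {0} ⊆ U')
    (R R' : ℝ) (hR : 0 < R) (hRR' : R < R') (N N' : ℕ) (hNN' : N' < N)
    (u : ℕ → EuclideanSpace ℂ (Fin d) → ℂ)
    (hanal : ∀ n, DifferentiableOn ℂ (u n) (tube d U' R'))
    (hball : ∀ n, ∀ ζ ∈ tube d U' R', ‖imPart d ζ‖ ^ N' * ‖u n ζ‖ ≤ 1) :
    ∃ φ : ℕ → ℕ, StrictMono φ ∧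
      ∃ v : EuclideanSpace ℂ (Fin d) → ℂ, DifferentiableOn ℂ v (tube d U R) ∧
        ∀ ε > (0 : ℝ), ∀ᶠ n in atTop,
          ∀ ζ ∈ tube d U R, ‖imPart d ζ‖ ^ N * ‖u (φ n) ζ - v ζ‖ ≤ ε := by
  classical
  -- `0 ∉ U`, else `U` would be the whole space and `U = U'`
  have hU0 : (0 : EuclideanSpace ℝ (Fin d)) ∉ U := by
    intro h0
    apply hUne
    have hUuniv : U = univ := by
      ext x
      simp only [mem_univ, iff_true]
      rcases eq_or_ne x 0 with rfl | hx
      · exact h0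
      obtain ⟨ε, hε, hb⟩ := Metric.isOpen_iff.mp hUopen 0 h0
      have hxn : 0 < ‖x‖ := norm_pos_iff.mpr hx
      have hmem : (ε/2/‖x‖) • x ∈ U := by
        apply hb
        rw [mem_ball_zero_iff, norm_smul, Real.norm_eq_abs, abs_of_pos (by positivity),
          div_mul_cancel₀ _ hxn.ne']
        linarith
      have hx2 := hUcone _ hmem (‖x‖/(ε/2)) (by positivity)
      have hsc : (‖x‖/(ε/2)) * (ε/2/‖x‖) = 1 := by field_simp
      rwa [smul_smul, hsc, one_smul] at hx2
    exact subset_antisymm hUU' (hUuniv ▸ subset_univ U')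
  -- the open set on which we apply Montel's theorem
  set Ω : Set (EuclideanSpace ℂ (Fin d)) :=
    {ζ | ‖ζ‖ < R' ∧ imPart d ζ ∈ U' ∧ imPart d ζ ≠ 0} with hΩdef
  have hΩo : IsOpen Ω := by
    apply IsOpen.inter (isOpen_lt continuous_norm continuous_const)
    apply IsOpen.inter (hU'open.preimage (continuous_imPart d))
    exact (isOpen_compl_iff.mpr isClosed_singleton).preimage (continuous_imPart d)
  have hΩsub : Ω ⊆ tube d U' R' := fun ζ hζ => ⟨hζ.1, hζ.2.1⟩
  have htube : tube d U R ⊆ Ω := by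
    rintro ζ ⟨h1, h2⟩
    exact ⟨h1.trans hRR', hUU' h2, fun h => hU0 (h ▸ h2)⟩
  -- local bounds
  have hloc : ∀ ζ, ∀ hζ : ζ ∈ Ω, ∃ r M, 0 < r ∧ ball ζ (2*r) ⊆ Ω ∧
      ∀ n, ∀ z ∈ ball ζ (2*r), ‖u n z‖ ≤ M := by
    intro ζ hζ
    set c := ‖imPart d ζ‖ with hcdef
    have hc : 0 < c := norm_pos_iff.mpr hζ.2.2
    obtain ⟨s, hs, hbs⟩ := Metric.isOpen_iff.mp hΩo ζ hζ
    refine ⟨min s (c/2) / 2, ((c/2) ^ N')⁻¹, by positivity, ?_, ?_⟩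
    · intro z hz
      apply hbs
      rw [mem_ball] at hz ⊢
      calc dist z ζ < 2 * (min s (c/2) / 2) := hz
        _ = min s (c/2) := by ring
        _ ≤ s := min_le_left _ _
    · intro n z hz
      have hzΩ : z ∈ Ω := by
        apply hbs
        rw [mem_ball] at hz ⊢
        calc dist z ζ < 2 * (min s (c/2) / 2) := hz
          _ = min s (c/2) := by ring
          _ ≤ s := min_le_left _ _
      have him : c/2 ≤ ‖imPart d z‖ := by
        have h1 : ‖imPart d ζ - imPart d z‖ ≤ ‖ζ - z‖ := by
          rw [← imPart_sub]; exact norm_imPart_le d _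
        have h2 : ‖ζ - z‖ < c/2 := by
          rw [← dist_eq_norm, dist_comm]
          rw [mem_ball] at hz
          calc dist z ζ < 2 * (min s (c/2) / 2) := hz
            _ = min s (c/2) := by ring
            _ ≤ c/2 := min_le_right _ _
        have h3 := norm_sub_norm_le (imPart d ζ) (imPart d z)
        linarith [h3.trans h1, h2, hcdef]
      have hb1 := hball n z (hΩsub hzΩ)
      have h0' : 0 < ‖imPart d z‖ := lt_of_lt_of_le (half_pos hc) him
      have hp : (0:ℝ) < ‖imPart d z‖ ^ N' := pow_pos h0' N'
      have hb2 : ‖u n z‖ ≤ (‖imPart d z‖ ^ N')⁻¹ := by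
        rw [inv_eq_one_div, le_div_iff₀ hp, mul_comm]
        exact hb1
      apply hb2.trans
      apply inv_anti₀ (by positivity)
      exact pow_le_pow_left₀ (by positivity) him N'
  obtain ⟨φ, hφ, v, htluo, hvdiff⟩ := montel hΩo u (fun n => (hanal n).mono hΩsub) hloc
  refine ⟨φ, hφ, v, hvdiff.mono htube, ?_⟩
  -- the limit satisfies the same bound
  have hvbd : ∀ ζ ∈ Ω, ‖imPart d ζ‖ ^ N' * ‖v ζ‖ ≤ 1 := by
    intro ζ hζ
    have hten := htluo.tendsto_at hζ
    have hlim : Tendsto (fun n => ‖imPart d ζ‖ ^ N' * ‖u (φ n) ζ‖) atTop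
        (𝓝 (‖imPart d ζ‖ ^ N' * ‖v ζ‖)) := tendsto_const_nhds.mul hten.norm
    exact le_of_tendsto hlim (Eventually.of_forall fun n => hball (φ n) ζ (hΩsub hζ))
  intro ε hε
  set δ := min 1 (ε/2) with hδdef
  have hδ : 0 < δ := lt_min one_pos (by positivity)
  have hδ1 : δ ≤ 1 := min_le_left _ _
  have hδε : δ ≤ ε/2 := min_le_right _ _
  set K := {ζ : EuclideanSpace ℂ (Fin d) |
    ‖ζ‖ ≤ R ∧ imPart d ζ ∈ closure U ∧ δ ≤ ‖imPart d ζ‖} with hKdef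
  have hKΩ : K ⊆ Ω := by
    rintro ζ ⟨h1, h2, h3⟩
    have hne0 : imPart d ζ ≠ 0 := by
      intro h
      rw [h, norm_zero] at h3
      linarith
    exact ⟨h1.trans_lt hRR', hcomp ⟨h2, hne0⟩, hne0⟩
  have hKc : IsCompact K := by
    apply Metric.isCompact_of_isClosed_isBounded
    · have c1 : IsClosed {ζ : EuclideanSpace ℂ (Fin d) | ‖ζ‖ ≤ R} :=
        isClosed_le continuous_norm continuous_const
      have c2 : IsClosed {ζ : EuclideanSpace ℂ (Fin d) | imPart d ζ ∈ closure U} :=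
        isClosed_closure.preimage (continuous_imPart d)
      have c3 : IsClosed {ζ : EuclideanSpace ℂ (Fin d) | δ ≤ ‖imPart d ζ‖} :=
        isClosed_le continuous_const (continuous_norm.comp (continuous_imPart d))
      exact (c1.inter (c2.inter c3))
    · apply (Metric.isBounded_closedBall (x := (0 : EuclideanSpace ℂ (Fin d))) (r := R)).subset
      intro ζ hζ
      rw [mem_closedBall, dist_zero_right]
      exact hζ.1
  have htuoK : TendstoUniformlyOn (fun n => u (φ n)) v atTop K :=
    (tendstoLocallyUniformlyOn_iff_tendstoUniformlyOn_of_compact hKc).mp (htluo.mono hKΩ)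
  have hev := Metric.tendstoUniformlyOn_iff.mp htuoK (ε/(R^N+1)) (by positivity)
  filter_upwards [hev] with n hn
  intro ζ hζt
  have hζΩ : ζ ∈ Ω := htube hζt
  have himR : ‖imPart d ζ‖ ≤ R := (norm_imPart_le d ζ).trans hζt.1.le
  by_cases hcase : ‖imPart d ζ‖ < δ
  · -- small imaginary part: use the gain `N - N'`
    set x := ‖imPart d ζ‖ with hxdef
    have hx0 : 0 ≤ x := norm_nonneg _
    have hx1 : x ≤ 1 := le_of_lt (lt_of_lt_of_le hcase hδ1)
    have hub := hball (φ n) ζ (hΩsub hζΩ)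
    have hvb := hvbd ζ hζΩ
    have hsplit : x ^ N = x ^ (N - N') * x ^ N' := by
      rw [← pow_add]
      congr 1
      omega
    have hxpow : x ^ (N - N') ≤ x := by
      calc x ^ (N - N') ≤ x ^ 1 := by
            apply pow_le_pow_of_le_one hx0 hx1
            omega
        _ = x := pow_one x
    calc x ^ N * ‖u (φ n) ζ - v ζ‖
        ≤ x ^ N * (‖u (φ n) ζ‖ + ‖v ζ‖) := by
          apply mul_le_mul_of_nonneg_left (norm_sub_le _ _) (by positivity)
      _ = x ^ (N - N') * (x ^ N' * ‖u (φ n) ζ‖ + x ^ N' * ‖v ζ‖) := by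
          rw [hsplit]; ring
      _ ≤ x * (1 + 1) := by
          apply mul_le_mul hxpow _ (by positivity) hx0
          exact add_le_add hub hvb
      _ ≤ δ * 2 := by nlinarith
      _ ≤ ε := by linarith
  · -- away from the boundary: uniform convergence on the compact set `K`
    push_neg at hcase
    have hζK : ζ ∈ K := ⟨hζt.1.le, subset_closure hζt.2, hcase⟩
    have hd := hn ζ hζK
    rw [dist_comm, dist_eq_norm] at hd
    calc ‖imPart d ζ‖ ^ N * ‖u (φ n) ζ - v ζ‖
        ≤ R ^ N * (ε/(R^N+1)) := by
          apply mul_le_mul _ hd.le (norm_nonneg _) (by positivity)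
          exact pow_le_pow_left₀ (norm_nonneg _) himR N
      _ ≤ ε := by
          rw [div_eq_mul_inv, ← mul_assoc, mul_comm (R^N) ε, mul_assoc]
          apply mul_le_of_le_one_right hε.le
          rw [mul_inv_le_iff₀ (by positivity), one_mul]
          linarith [pow_nonneg hR.le N]
end
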